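/- If f ∈ L¹(ℝⁿ) is compactly supported and its Fourier transform 𝓕f vanishes on a nonempty open subset of ℝⁿ, then f = 0 almost everywhere. -/

import Mathlib

/-!
Along any line `t ↦ w + t • d`, the Fourier transform of a compactly supported integrable `f`
is the restriction to `ℝ` of the entire function `z ↦ ∫ exp (-2πi z ⟪x, d⟫) 𝐞(-⟪x, w⟫) f(x) dx`
(the exponent is bounded on the support of `f`, so one may differentiate under the integral).
If `𝓕 f` vanishes near a point `w₀`, joining `w₀` to an arbitrary `w` by a line and applying the
identity theorem gives `𝓕 f = 0`. Finally `𝓕 f = 0` forces `f = 0` a.e.: for every test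
function `g`, writing `g = 𝓕 φ` with `φ` Schwartz, `∫ g f = ∫ 𝓕 f · φ = 0`.
-/

noncomputable section
open MeasureTheory

/-- The Fourier transform on `ℝⁿ`, `𝓕f(ζ) = ∫ e^{−i x·ζ} f(x) dx`. -/
def euclideanFourier {n : ℕ} (f : EuclideanSpace ℝ (Fin n) → ℂ)
    (ζ : EuclideanSpace ℝ (Fin n)) : ℂ :=
  ∫ x : EuclideanSpace ℝ (Fin n),
    Complex.exp (-(Complex.I * ((inner ℝ x ζ : ℝ) : ℂ))) * f x

open Complex Real FourierTransform Filter Set Topology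
open scoped RealInnerProductSpace

section ParametricExp

variable {α E : Type*} [MeasurableSpace α] {μ : Measure α}
  [NormedAddCommGroup E] [NormedSpace ℂ E] {g : α → ℂ} {f : α → E} {M : ℝ}

lemma norm_cexp_mul_le {z w : ℂ} (hw : ‖w‖ ≤ M) : ‖cexp (z * w)‖ ≤ Real.exp (‖z‖ * M) :=
  (norm_exp_le_exp_norm _).trans <| Real.exp_le_exp.2 <| by
    rw [norm_mul]; exact mul_le_mul_of_nonneg_left hw (norm_nonneg z)

lemma MeasureTheory.Integrable.cexp_mul_smul (hf : Integrable f μ)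
    (hg : AEStronglyMeasurable g μ) (hgM : ∀ᵐ x ∂μ, ‖g x‖ ≤ M) (z : ℂ) :
    Integrable (fun x ↦ cexp (z * g x) • f x) μ := by
  refine (hf.norm.const_mul (Real.exp (‖z‖ * M))).mono'
    ((continuous_exp.comp_aestronglyMeasurable (hg.const_mul z)).smul hf.1) ?_
  filter_upwards [hgM] with x hx
  rw [norm_smul]
  exact mul_le_mul_of_nonneg_right (norm_cexp_mul_le hx) (norm_nonneg _)

theorem MeasureTheory.Integrable.differentiable_integral_cexp_mul_smul (hf : Integrable f μ)
    (hg : AEStronglyMeasurable g μ) (hgM : ∀ᵐ x ∂μ, ‖g x‖ ≤ M) :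
    Differentiable ℂ fun z ↦ ∫ x, cexp (z * g x) • f x ∂μ := by
  intro z₀
  have hderiv := hasDerivAt_integral_of_dominated_loc_of_deriv_le (μ := μ)
    (F' := fun z x ↦ (cexp (z * g x) * g x) • f x)
    (bound := fun x ↦ Real.exp ((‖z₀‖ + 1) * M) * M * ‖f x‖) (Metric.ball_mem_nhds z₀ one_pos)
    (.of_forall fun z ↦ (hf.cexp_mul_smul hg hgM z).1) (hf.cexp_mul_smul hg hgM z₀)
    (((continuous_exp.comp_aestronglyMeasurable (hg.const_mul z₀)).mul hg).smul hf.1)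
    ?_ (hf.norm.const_mul _) ?_
  · exact hderiv.2.differentiableAt
  · filter_upwards [hgM] with x hx z hz
    have hz' : ‖z‖ ≤ ‖z₀‖ + 1 := by
      linarith [norm_le_norm_add_norm_sub' z z₀, (mem_ball_iff_norm.1 hz).le]
    have hM : 0 ≤ M := (norm_nonneg _).trans hx
    have hexp : ‖cexp (z * g x)‖ ≤ Real.exp ((‖z₀‖ + 1) * M) :=
      (norm_cexp_mul_le hx).trans (Real.exp_le_exp.2 (by gcongr))
    rw [norm_smul, norm_mul]
    gcongr
  · filter_upwards with x z _
    exact (((hasDerivAt_id z).mul_const (g x)).cexp.smul_const (f x)).congr_deriv (by simp)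

end ParametricExp

section FourierCompactSupport

variable {V E : Type*} [NormedAddCommGroup V] [InnerProductSpace ℝ V] [FiniteDimensional ℝ V]
  [MeasurableSpace V] [BorelSpace V] [NormedAddCommGroup E] [NormedSpace ℂ E] [CompleteSpace E]
  {f : V → E}

theorem HasCompactSupport.analyticOnNhd_fourier_add_smul (hsupp : HasCompactSupport f)
    (hf : Integrable f) (w d : V) : AnalyticOnNhd ℝ (fun t : ℝ ↦ 𝓕 f (w + t • d)) univ := by
  set g : V → ℂ := fun x ↦ (-2 * π * ⟪x, d⟫ : ℝ) * I
  have hg : Continuous g := by fun_prop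
  obtain ⟨M, hM⟩ := hsupp.isCompact.exists_bound_of_continuousOn hg.continuousOn
  set Φ : ℂ → E := fun z ↦ ∫ x in tsupport f, cexp (z * g x) • 𝐞 (-⟪x, w⟫) • f x
  have hΦ : Differentiable ℂ Φ :=
    ((fourierIntegral_convergent_iff w).2 hf).integrableOn.differentiable_integral_cexp_mul_smul
      hg.aestronglyMeasurable (ae_restrict_of_forall_mem (isClosed_tsupport f).measurableSet hM)
  have hΦ_real : (fun t : ℝ ↦ 𝓕 f (w + t • d)) = Φ ∘ ofRealCLM := by
    ext t
    rw [Function.comp_apply, ofRealCLM_apply, fourier_eq,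
      ← setIntegral_eq_integral_of_forall_compl_eq_zero (s := tsupport f)
        fun x hx ↦ by simp [image_eq_zero_of_notMem_tsupport hx]]
    refine setIntegral_congr_fun (isClosed_tsupport f).measurableSet fun x _ ↦ ?_
    simp only [g, smul_smul, Circle.smul_def, fourierChar_apply, ← Complex.exp_add,
      inner_add_right, inner_smul_right]
    congr 2
    push_cast
    ring
  rw [hΦ_real]
  exact fun t _ ↦ (hΦ.analyticAt _).restrictScalars.comp (ofRealCLM.analyticAt t)

theorem HasCompactSupport.fourier_eq_zero_of_eqOn_zero (hsupp : HasCompactSupport f)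
    (hf : Integrable f) {U : Set V} (hU : IsOpen U) (hne : U.Nonempty)
    (hvan : EqOn (𝓕 f) 0 U) : 𝓕 f = 0 := by
  obtain ⟨w₀, hw₀⟩ := hne
  ext w
  have hline : Tendsto (fun t : ℝ ↦ w₀ + t • (w - w₀)) (𝓝 0) (𝓝 w₀) := by
    simpa using ((continuous_id.smul continuous_const).const_add w₀).tendsto (0 : ℝ)
  have hzero : (fun t : ℝ ↦ 𝓕 f (w₀ + t • (w - w₀))) =ᶠ[𝓝 0] 0 :=
    (hline.eventually (hU.mem_nhds hw₀)).mono fun _ ht ↦ hvan ht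
  simpa using (hsupp.analyticOnNhd_fourier_add_smul hf w₀ (w - w₀)
    ).eqOn_zero_of_preconnected_of_eventuallyEq_zero isPreconnected_univ (mem_univ 0) hzero
    (mem_univ 1)

end FourierCompactSupport

theorem MeasureTheory.Integrable.ae_eq_zero_of_fourier_eq_zero {V : Type*}
    [NormedAddCommGroup V] [InnerProductSpace ℝ V] [FiniteDimensional ℝ V] [MeasurableSpace V]
    [BorelSpace V] {f : V → ℂ} (hf : Integrable f) (h : 𝓕 f = 0) : f =ᵐ[volume] 0 := by
  refine ae_eq_zero_of_integral_contDiff_smul_eq_zero hf.locallyIntegrable fun g hg hgsupp ↦ ?_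
  set φ : SchwartzMap V ℂ :=
    𝓕⁻ ((hgsupp.comp_left ofReal_zero).toSchwartzMap (ofRealCLM.contDiff.comp hg))
  have hφ : 𝓕 (φ : V → ℂ) = fun x ↦ (g x : ℂ) := by
    rw [← SchwartzMap.fourier_coe, FourierTransform.fourier_fourierInv_eq]; rfl
  have parseval : ∫ ξ, 𝓕 f ξ • φ ξ = ∫ x, f x • 𝓕 (φ : V → ℂ) x := by
    have := VectorFourier.integral_fourierIntegral_smul_eq_flip (L := innerₗ V)
      continuous_fourierChar continuous_inner hf (φ.integrable (μ := volume))
    rwa [flip_innerₗ] at this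
  simp_rw [h, hφ, Pi.zero_apply, zero_smul, integral_zero] at parseval
  simp_rw [real_smul, mul_comm (g _ : ℂ), ← smul_eq_mul]
  exact parseval.symm

lemma fourier_eq_euclideanFourier {n : ℕ} (f : EuclideanSpace ℝ (Fin n) → ℂ)
    (w : EuclideanSpace ℝ (Fin n)) : 𝓕 f w = euclideanFourier f ((2 * π) • w) := by
  rw [fourier_eq', euclideanFourier]
  congr 1 with x
  rw [smul_eq_mul, real_inner_smul_right]
  push_cast
  ring_nf

/-- if `f ∈ L¹(ℝⁿ)` is compactly supported and its Fourier transform vanishes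
on a nonempty open subset of `ℝⁿ`, then `f = 0` almost everywhere. -/
theorem eq_zero_of_fourier_vanishes_on_open {n : ℕ}
    (f : EuclideanSpace ℝ (Fin n) → ℂ) (hf : Integrable f) (hsupp : HasCompactSupport f)
    (U : Set (EuclideanSpace ℝ (Fin n))) (hU : IsOpen U) (hne : U.Nonempty)
    (hvan : ∀ ζ ∈ U, euclideanFourier f ζ = 0) :
    f =ᵐ[volume] 0 := by
  obtain ⟨u, hu⟩ := hne
  have hvan' : EqOn (𝓕 f) 0 (((2 * π) • ·) ⁻¹' U) := fun w hw ↦ by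
    rw [fourier_eq_euclideanFourier]; exact hvan _ hw
  refine hf.ae_eq_zero_of_fourier_eq_zero (hsupp.fourier_eq_zero_of_eqOn_zero hf
    (hU.preimage (continuous_const_smul _)) ⟨(2 * π)⁻¹ • u, ?_⟩ hvan')
  rwa [mem_preimage, smul_smul, mul_inv_cancel₀ two_pi_pos.ne', one_smul]
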